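/- Let Ĝ be a signed graph, Ĥ a signed graph whose underlying graph has negative girth at least k (every negative cycle has length at least k), and φ a sign-preserving homomorphism from Ĝ to Ĥ. Then for every i with 1 ≤ i ≤ k-1, φ is a proper colouring of the strong exact-distance -i graph of Ĝ, i.e., φ(u) ≠ φ(v) whenever uv is an edge of that graph. -/

import Mathlib

open SimpleGraph

/-- The number of negative edges of a walk, where `σ e = true` means edge `e` is negative. -/
def negCount {V : Type} {G : SimpleGraph V} (σ : Sym2 V → Bool) {x y : V}
    (p : G.Walk x y) : ℕ :=
  (p.edges.filter (fun e => σ e)).length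

/-- A walk is negative if it contains an odd number of negative edges. -/
def IsNegWalk {V : Type} {G : SimpleGraph V} (σ : Sym2 V → Bool) {x y : V}
    (p : G.Walk x y) : Prop :=
  Odd (negCount σ p)

/-- The exact-distance `-k` graph of the signed graph `(G, σ)`:
`xy` is an edge iff `d_G(x,y) = k` and every `xy`-path of length `k` is negative. -/
def exactDistNeg {V : Type} (G : SimpleGraph V) (σ : Sym2 V → Bool) (k : ℕ) :
    SimpleGraph V :=
  SimpleGraph.fromRel (fun x y =>
    G.dist x y = k ∧ ∀ p : G.Walk x y, p.IsPath → p.length = k → IsNegWalk σ p)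

/-- The strong exact-distance `-k` graph of the signed graph `(G, σ)`:
`xy` is an edge iff `d_G(x,y) = k` and some `xy`-path of length `k` is negative. -/
def strongExactDistNeg {V : Type} (G : SimpleGraph V) (σ : Sym2 V → Bool) (k : ℕ) :
    SimpleGraph V :=
  SimpleGraph.fromRel (fun x y =>
    G.dist x y = k ∧ ∃ p : G.Walk x y, p.IsPath ∧ p.length = k ∧ IsNegWalk σ p)

/-- `WReach G L k y` : the set of vertices weakly `k`-reachable from `y` w.r.t. ordering `L`. -/
def WReach {V : Type} (G : SimpleGraph V) (L : LinearOrder V) (k : ℕ) (y : V) : Set V :=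
  {x | ∃ p : G.Walk x y, p.IsPath ∧ p.length ≤ k ∧ ∀ z ∈ p.support, L.le x z}

/-- The weak `k`-colouring number of `G`. -/
noncomputable def wcol {V : Type} (G : SimpleGraph V) (k : ℕ) : ℕ :=
  ⨅ L : LinearOrder V, ⨆ y : V, (WReach G L k y).ncard

/-- `DReach G L k y` : the set of vertices `x` such that there is an `xy`-path
`z_0, …, z_s` (`x = z_0`, `y = z_s`) of length `s ≤ k` on which `x` is the `L`-minimum
and `y ≤_L z_i` for all `⌊k/2⌋ + 1 ≤ i ≤ s`. -/
def DReach {V : Type} (G : SimpleGraph V) (L : LinearOrder V) (k : ℕ) (y : V) : Set V :=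
  {x | ∃ p : G.Walk x y, p.IsPath ∧ p.length ≤ k ∧ (∀ z ∈ p.support, L.le x z) ∧
        ∀ i, k / 2 + 1 ≤ i → i ≤ p.length → L.le y (p.support.getD i y)}

/-- The distance-`k`-colouring number of `G`. -/
noncomputable def dcol {V : Type} (G : SimpleGraph V) (k : ℕ) : ℕ :=
  ⨅ L : LinearOrder V, ⨆ y : V, (DReach G L k y).ncard

/-- `SReach G L k y` : the set of vertices strongly `k`-reachable from `y` w.r.t. `L`. -/
def SReach {V : Type} (G : SimpleGraph V) (L : LinearOrder V) (k : ℕ) (y : V) : Set V :=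
  {x | ∃ p : G.Walk x y, p.IsPath ∧ p.length ≤ k ∧ (∀ z ∈ p.support, L.le x z) ∧
        ∀ z ∈ p.support, z ≠ x → L.le y z}

/-- The strong `k`-colouring number of `G`. -/
noncomputable def scol {V : Type} (G : SimpleGraph V) (k : ℕ) : ℕ :=
  ⨅ L : LinearOrder V, ⨆ y : V, (SReach G L k y).ncard

/-- `H` is a minor of `G` (branch-set definition). -/
def IsMinor {W V : Type} (H : SimpleGraph W) (G : SimpleGraph V) : Prop :=
  ∃ B : W → Set V,
    (∀ w, (B w).Nonempty) ∧
    (∀ w, (G.induce (B w)).Connected) ∧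
    (Pairwise (Function.onFun Disjoint B)) ∧
    ∀ w w', H.Adj w w' → ∃ u ∈ B w, ∃ v ∈ B w', G.Adj u v

/-- `G` is planar iff it has no `K₅` and no `K₃,₃` minor (Wagner's theorem). -/
def IsPlanar {V : Type} (G : SimpleGraph V) : Prop :=
  ¬ IsMinor (completeGraph (Fin 5)) G ∧
  ¬ IsMinor (completeBipartiteGraph (Fin 3) (Fin 3)) G

/-- `G` is outerplanar iff it has no `K₄` and no `K₂,₃` minor. -/
def IsOuterplanar {V : Type} (G : SimpleGraph V) : Prop :=
  ¬ IsMinor (completeGraph (Fin 4)) G ∧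
  ¬ IsMinor (completeBipartiteGraph (Fin 2) (Fin 3)) G

/-- `G` has treewidth at most `t` (tree-decomposition definition). -/
def HasTreewidthLE {V : Type} (G : SimpleGraph V) (t : ℕ) : Prop :=
  ∃ (ι : Type) (T : SimpleGraph ι) (B : ι → Finset V),
    T.Connected ∧ T.IsAcyclic ∧
    (∀ v, ∃ i, v ∈ B i) ∧
    (∀ u v, G.Adj u v → ∃ i, u ∈ B i ∧ v ∈ B i) ∧
    (∀ v, (T.induce {i | v ∈ B i}).Connected) ∧
    (∀ i, (B i).card ≤ t + 1)

/-!
Map a negative path of length `i` realising the edge `uv` of the strong exact-distance graph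
along `φ`. If `φ u = φ v`, its image is a closed walk of length `i` in `H` with the same (odd)
number of negative edges. Peeling off closed subwalks one at a time, every negative closed walk
contains a negative cycle no longer than itself, so `H` would have a negative cycle of length
at most `i < k`.
-/

section NegativeWalks

variable {V W : Type} {G : SimpleGraph V} {H : SimpleGraph W}

lemma negCount_copy (σ : Sym2 V → Bool) {x y x' y' : V} (p : G.Walk x y) (hx : x = x')
    (hy : y = y') : negCount σ (p.copy hx hy) = negCount σ p := by
  subst hx hy
  rfl

lemma negCount_cons (σ : Sym2 V → Bool) {x y z : V} (h : G.Adj x y) (p : G.Walk y z) :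
    negCount σ (Walk.cons h p) = (if σ s(x, y) then 1 else 0) + negCount σ p := by
  by_cases hσ : σ s(x, y) <;> simp [negCount, hσ, Nat.add_comm]

lemma negCount_map {σ : Sym2 V → Bool} {τ : Sym2 W → Bool} (f : G →g H)
    (hsign : ∀ u v, G.Adj u v → σ s(u, v) = τ s(f u, f v)) {x y : V} (p : G.Walk x y) :
    negCount τ (p.map f) = negCount σ p := by
  induction p with
  | nil => rfl
  | cons h p ih => rw [Walk.map_cons, negCount_cons, negCount_cons, ih, hsign _ _ h]

lemma not_isNegWalk_nil (σ : Sym2 V → Bool) {x : V} : ¬IsNegWalk σ (Walk.nil : G.Walk x x) :=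
  Nat.not_odd_zero

lemma isNegWalk_cons_iff (σ : Sym2 V → Bool) {x y z : V} (h : G.Adj x y) (p : G.Walk y z) :
    IsNegWalk σ (Walk.cons h p) ↔ (σ s(x, y) ↔ ¬IsNegWalk σ p) := by
  by_cases hσ : σ s(x, y) <;> simp [IsNegWalk, negCount_cons, hσ, Nat.odd_add]

lemma isNegWalk_append_iff (σ : Sym2 V → Bool) {x y z : V} (p : G.Walk x y) (q : G.Walk y z) :
    IsNegWalk σ (p.append q) ↔ (IsNegWalk σ p ↔ ¬IsNegWalk σ q) := by
  simp only [IsNegWalk, negCount, Walk.edges_append, List.filter_append, List.length_append,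
    Nat.odd_add, Nat.not_odd_iff_even]

end NegativeWalks

namespace SimpleGraph.Walk

variable {W : Type} {H : SimpleGraph W} (τ : Sym2 W → Bool)

/-- A path closed up by an edge fails to be a cycle only as the backtrack `u v u`, which is
positive. -/
lemma IsPath.isCycle_cons_of_isNegWalk {u v : W} {h : H.Adj u v} {q : H.Walk v u}
    (hq : q.IsPath) (hneg : IsNegWalk τ (cons h q)) : (cons h q).IsCycle := by
  refine (cons_isCycle_iff q h).mpr ⟨hq, fun he => ?_⟩
  rw [hq.eq_adj_toWalk_of_mem_edges (by rwa [Sym2.eq_swap])] at hneg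
  simp [isNegWalk_cons_iff, not_isNegWalk_nil, Sym2.eq_swap] at hneg

theorem exists_isPath_or_negative_cycle :
    ∀ {u v : W} (p : H.Walk u v),
      (∃ q : H.Walk u v, q.IsPath ∧ q.length ≤ p.length ∧ (IsNegWalk τ q ↔ IsNegWalk τ p)) ∨
      ∃ (x : W) (c : H.Walk x x), c.IsCycle ∧ IsNegWalk τ c ∧ c.length ≤ p.length
  | _, _, .nil => .inl ⟨.nil, .nil, le_rfl, Iff.rfl⟩
  | u, _, .cons h p => by
    classical
    rcases exists_isPath_or_negative_cycle p with ⟨q, hq, hqlen, hqneg⟩ | ⟨x, c, hc, hneg, hlen⟩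
    swap
    · exact .inr ⟨x, c, hc, hneg, by rw [length_cons]; omega⟩
    by_cases hu : u ∈ q.support
    swap
    · refine .inl ⟨cons h q, hq.cons hu, by simpa using hqlen, ?_⟩
      rw [isNegWalk_cons_iff, isNegWalk_cons_iff, hqneg]
    -- `q` passes through `u`: its part up to `u` closes up with `h` into a closed walk.
    have hsplit := isNegWalk_append_iff τ (q.takeUntil u hu) (q.dropUntil u hu)
    rw [take_spec q hu] at hsplit
    have hlen₁ := q.length_takeUntil_le_length hu
    have hlen₂ := q.length_dropUntil_le_length hu
    by_cases hneg : IsNegWalk τ (cons h (q.takeUntil u hu))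
    · exact .inr ⟨u, _, (hq.takeUntil hu).isCycle_cons_of_isNegWalk τ hneg, hneg,
        by simp only [length_cons]; omega⟩
    · refine .inl ⟨q.dropUntil u hu, hq.dropUntil hu, by rw [length_cons]; omega, ?_⟩
      rw [isNegWalk_cons_iff] at hneg ⊢
      tauto

theorem exists_negative_cycle_of_isNegWalk {w : W} (c : H.Walk w w) (hc : IsNegWalk τ c) :
    ∃ (x : W) (d : H.Walk x x), d.IsCycle ∧ IsNegWalk τ d ∧ d.length ≤ c.length := by
  refine (exists_isPath_or_negative_cycle τ c).resolve_left ?_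
  rintro ⟨q, hq, -, hqneg⟩
  rw [(isPath_iff_nil.mp hq).eq_nil] at hqneg
  exact not_isNegWalk_nil τ (hqneg.mpr hc)

theorem exists_negative_cycle_of_map {V : Type} {G : SimpleGraph V} {σ : Sym2 V → Bool}
    (f : G →g H) (hsign : ∀ u v, G.Adj u v → σ s(u, v) = τ s(f u, f v)) {a b : V}
    (p : G.Walk a b) (hp : IsNegWalk σ p) (hab : f a = f b) :
    ∃ (x : W) (d : H.Walk x x), d.IsCycle ∧ IsNegWalk τ d ∧ d.length ≤ p.length := by
  have hc : IsNegWalk τ ((p.map f).copy rfl hab.symm) := by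
    rwa [IsNegWalk, negCount_copy, negCount_map f hsign]
  simpa using exists_negative_cycle_of_isNegWalk τ _ hc

end SimpleGraph.Walk

theorem signPreserving_hom_proper_coloring_of_strongExactDistNeg_general
    {V W : Type} (G : SimpleGraph V) (σ : Sym2 V → Bool)
    (H : SimpleGraph W) (τ : Sym2 W → Bool) (k : ℕ) (φ : V → W)
    (hom : ∀ u v, G.Adj u v → H.Adj (φ u) (φ v))
    (hsign : ∀ u v, G.Adj u v → σ s(u, v) = τ s(φ u, φ v))
    (hgirth : ∀ (w : W) (c : H.Walk w w), c.IsCycle → IsNegWalk τ c → k ≤ c.length)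
    (i : ℕ) (hik : i ≤ k - 1) :
    ∀ u v, (strongExactDistNeg G σ i).Adj u v → φ u ≠ φ v := by
  let f : G →g H := ⟨φ, hom _ _⟩
  have ne_of_isNegWalk : ∀ a b (p : G.Walk a b), p.length = i → IsNegWalk σ p → φ a ≠ φ b := by
    intro a b p hlen hneg hab
    obtain ⟨x, d, hd, hdneg, hdlen⟩ := Walk.exists_negative_cycle_of_map τ f hsign p hneg hab
    have := hgirth x d hd hdneg
    -- needed when `k = 0`, where the truncated `i ≤ k - 1` does not give `i < k`
    have := hd.three_le_length
    omega
  intro u v huv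
  rw [strongExactDistNeg, fromRel_adj] at huv
  rcases huv.2 with ⟨-, p, -, hlen, hneg⟩ | ⟨-, p, -, hlen, hneg⟩
  · exact ne_of_isNegWalk u v p hlen hneg
  · exact (ne_of_isNegWalk v u p hlen hneg).symm

theorem signPreserving_hom_proper_coloring_of_strongExactDistNeg
    {V W : Type} (G : SimpleGraph V) (σ : Sym2 V → Bool)
    (H : SimpleGraph W) (τ : Sym2 W → Bool) (k : ℕ) (φ : V → W)
    (hom : ∀ u v, G.Adj u v → H.Adj (φ u) (φ v))
    (hsign : ∀ u v, G.Adj u v → σ s(u, v) = τ s(φ u, φ v))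
    (hgirth : ∀ (w : W) (c : H.Walk w w), c.IsCycle → IsNegWalk τ c → k ≤ c.length)
    (i : ℕ) (hi1 : 1 ≤ i) (hik : i ≤ k - 1) :
    ∀ u v, (strongExactDistNeg G σ i).Adj u v → φ u ≠ φ v :=
  signPreserving_hom_proper_coloring_of_strongExactDistNeg_general G σ H τ k φ hom hsign hgirth i
    hik
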